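/- arXiv:1606.04625 — 5 statements merged into one kernel-verified Lean document; each statement's English description precedes it below -/
import Mathlib

section
/- Let Γ = BiCay(H,R,L,S) be a connected bi-Cayley graph over a finite group H, and suppose that the normalizer of R(H) in Aut(Γ) acts transitively on the edges of Γ (i.e. Γ is normal edge-transitive). Then R = L = ∅, and consequently Γ is bipartite with the two orbits H₀ and H₁ of R(H) as its parts. -/
open SimpleGraph

/-- The bi-Cayley graph `BiCay(H,R,L,S)` on vertex set `H × Bool`,
where `(h, false)` plays the role of `h₀` and `(h, true)` of `h₁`. -/
def biCay (H : Type*) [Group H] (R L S : Set H) : SimpleGraph (H × Bool) where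
  Adj a b := a ≠ b ∧
    ((a.2 = false ∧ b.2 = false ∧ b.1 * a.1⁻¹ ∈ R ∧ a.1 * b.1⁻¹ ∈ R) ∨
     (a.2 = true ∧ b.2 = true ∧ b.1 * a.1⁻¹ ∈ L ∧ a.1 * b.1⁻¹ ∈ L) ∨
     (a.2 = false ∧ b.2 = true ∧ b.1 * a.1⁻¹ ∈ S) ∨
     (a.2 = true ∧ b.2 = false ∧ a.1 * b.1⁻¹ ∈ S))
  symm := ⟨by rintro a b ⟨hne, h⟩; exact ⟨hne.symm, by tauto⟩⟩
  loopless := ⟨by rintro a ⟨hne, _⟩; exact hne rfl⟩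

/-- Right multiplication by `g⁻¹` as an automorphism of the bi-Cayley graph;
the range of this homomorphism is the group `R(H)` of all right translations. -/
def biCayRightMul (H : Type*) [Group H] (R L S : Set H) :
    H →* (biCay H R L S ≃g biCay H R L S) where
  toFun g :=
    { toEquiv := Equiv.prodCongr (Equiv.mulRight g⁻¹) (Equiv.refl Bool)
      map_rel_iff' := by
        intro a b
        simp only [biCay, Equiv.prodCongr_apply, Equiv.coe_mulRight, Equiv.refl_apply,
          Prod.map, ne_eq, Prod.mk.injEq, Prod.ext_iff]
        constructor
        · rintro ⟨hne, h⟩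
          refine ⟨by rintro ⟨h1, h2⟩; exact hne ⟨by rw [h1], h2⟩, ?_⟩
          simpa [mul_assoc] using h
        · rintro ⟨hne, h⟩
          refine ⟨by rintro ⟨h1, h2⟩; exact hne ⟨mul_right_cancel h1, h2⟩, ?_⟩
          simpa [mul_assoc] using h }
  map_one' := by
    apply RelIso.ext; intro x; simp
  map_mul' g₁ g₂ := by
    apply RelIso.ext; intro x
    simp [RelIso.mul_apply, Prod.map, mul_assoc]

/-- The subgroup `R(H)` of right translations inside `Aut(BiCay(H,R,L,S))`. -/
def biCayRH (H : Type*) [Group H] (R L S : Set H) :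
    Subgroup (biCay H R L S ≃g biCay H R L S) :=
  (biCayRightMul H R L S).range

/-!
An automorphism normalizing `R(H)` permutes the `R(H)`-orbits `H₀` and `H₁`, so it
maps an edge inside one orbit to an edge inside one orbit. Connectedness forces an edge from `H₀`
to `H₁`, and edge transitivity then forbids edges inside an orbit; but any `x ∈ R` (resp. `L`)
gives such an edge from `1₀` to `x₀` (resp. `1₁` to `x₁`).
-/

namespace BiCay

variable {H : Type*} [Group H] {R L S : Set H} {x : H}

@[simp]
lemma rightMul_apply (g : H) (v : H × Bool) :
    biCayRightMul H R L S g v = (v.1 * g⁻¹, v.2) := rfl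

lemma adj_one_false (hx : x ∈ R) (hx' : x⁻¹ ∈ R) (hx1 : x ≠ 1) :
    (biCay H R L S).Adj (1, false) (x, false) :=
  ⟨by simp [hx1.symm], Or.inl ⟨rfl, rfl, by simpa using hx, by simpa using hx'⟩⟩

lemma adj_one_true (hx : x ∈ L) (hx' : x⁻¹ ∈ L) (hx1 : x ≠ 1) :
    (biCay H R L S).Adj (1, true) (x, true) :=
  ⟨by simp [hx1.symm], Or.inr <| Or.inl ⟨rfl, rfl, by simpa using hx, by simpa using hx'⟩⟩

lemma snd_apply_eq_of_mem_normalizer {φ : biCay H R L S ≃g biCay H R L S}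
    (hφ : φ ∈ Subgroup.normalizer (biCayRH H R L S : Set (biCay H R L S ≃g biCay H R L S)))
    {a b : H × Bool} (hab : a.2 = b.2) : (φ a).2 = (φ b).2 := by
  set t := biCayRightMul H R L S (b.1⁻¹ * a.1)
  obtain ⟨g, hg⟩ := MonoidHom.mem_range.mp <|
    (Subgroup.mem_normalizer_iff.mp hφ t).mp (MonoidHom.mem_range.mpr ⟨_, rfl⟩)
  have hta : t a = b := Prod.ext (by simp only [t, rightMul_apply]; group) hab
  have : φ b = biCayRightMul H R L S g (φ a) := by simp [hg, ← hta]
  rw [this, rightMul_apply]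

lemma snd_ne_of_adj_of_normalizer_edge_transitive (hconn : (biCay H R L S).Connected)
    (hET : ∀ e₁ ∈ (biCay H R L S).edgeSet, ∀ e₂ ∈ (biCay H R L S).edgeSet,
      ∃ φ ∈ Subgroup.normalizer (biCayRH H R L S : Set (biCay H R L S ≃g biCay H R L S)),
        Sym2.map ⇑φ e₁ = e₂)
    {a b : H × Bool} (hab : (biCay H R L S).Adj a b) : a.2 ≠ b.2 := by
  obtain ⟨d, -, hd₁, hd₂⟩ := (hconn.preconnected (1, false) (1, true)).some.exists_boundary_dart
    {v | v.2 = false} rfl (by simp)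
  obtain ⟨φ, hφ, he⟩ := hET s(a, b) hab _ d.edge_mem
  intro hsnd
  have hφsnd := snd_apply_eq_of_mem_normalizer hφ hsnd
  rw [Sym2.map_mk, Dart.edge, Sym2.eq_iff] at he
  apply hd₂
  show d.snd.2 = false
  rcases he with ⟨ha, hb⟩ | ⟨ha, hb⟩
  · rw [← hb, ← hφsnd, ha]; exact hd₁
  · rw [← ha, hφsnd, hb]; exact hd₁

end BiCay

theorem biCay_normal_edge_transitive_empty_general
    {H : Type*} [Group H] (R L S : Set H)
    (hR : R⁻¹ = R) (hL : L⁻¹ = L) (h1 : (1 : H) ∉ R ∪ L)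
    (hconn : (biCay H R L S).Connected)
    (hET : ∀ e₁ ∈ (biCay H R L S).edgeSet, ∀ e₂ ∈ (biCay H R L S).edgeSet,
      ∃ φ ∈ Subgroup.normalizer (biCayRH H R L S : Set (biCay H R L S ≃g biCay H R L S)), Sym2.map ⇑φ e₁ = e₂) :
    R = ∅ ∧ L = ∅ ∧
      ∀ a b : H × Bool, (biCay H R L S).Adj a b → a.2 ≠ b.2 := by
  have hcross {a b : H × Bool} : (biCay H R L S).Adj a b → a.2 ≠ b.2 :=
    BiCay.snd_ne_of_adj_of_normalizer_edge_transitive hconn hET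
  refine ⟨Set.eq_empty_of_forall_notMem fun x hx => ?_,
    Set.eq_empty_of_forall_notMem fun x hx => ?_, fun _ _ => hcross⟩
  · have hx1 : x ≠ 1 := by rintro rfl; exact h1 (.inl hx)
    exact hcross (BiCay.adj_one_false hx (hR ▸ Set.inv_mem_inv.mpr hx) hx1) rfl
  · have hx1 : x ≠ 1 := by rintro rfl; exact h1 (.inr hx)
    exact hcross (BiCay.adj_one_true hx (hL ▸ Set.inv_mem_inv.mpr hx) hx1) rfl

/-- If `Γ = BiCay(H,R,L,S)` is a connected bi-Cayley graph over a
finite group `H` and the normalizer of `R(H)` in `Aut(Γ)` is transitive on the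
edges of `Γ`, then `R = L = ∅`, and `Γ` is bipartite with the two copies of `H`
(the orbits `H₀, H₁` of `R(H)`) as its parts. -/
theorem biCay_normal_edge_transitive_empty
    {H : Type*} [Group H] [Finite H] (R L S : Set H)
    (hR : R⁻¹ = R) (hL : L⁻¹ = L) (h1 : (1 : H) ∉ R ∪ L)
    (hconn : (biCay H R L S).Connected)
    (hET : ∀ e₁ ∈ (biCay H R L S).edgeSet, ∀ e₂ ∈ (biCay H R L S).edgeSet,
      ∃ φ ∈ Subgroup.normalizer (biCayRH H R L S : Set (biCay H R L S ≃g biCay H R L S)), Sym2.map ⇑φ e₁ = e₂) :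
    R = ∅ ∧ L = ∅ ∧
      ∀ a b : H × Bool, (biCay H R L S).Adj a b → a.2 ≠ b.2 :=
  biCay_normal_edge_transitive_empty_general R L S hR hL h1 hconn hET
end

section
/- Let Γ = BiCay(H,∅,∅,S) be a connected bi-Cayley graph with 1 ∈ S which is normal locally arc-transitive (i.e. the stabilizer of 1₀ in the normalizer X of R(H) in Aut(Γ) is transitive on the neighbourhood of 1₀). Then X acts transitively on the arcs of Γ if and only if there exists an automorphism α of H with S^α = S⁻¹. -/
open SimpleGraph

/-!
An element `φ` of the normaliser `X` of `R(H)` conjugates `R(H)` by an automorphism `α` of `H`.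
If moreover `φ` swaps `1₀` and `1₁`, then `φ` is the flip `(h, i) ↦ (α h, 1 - i)`, and the flip is
a graph automorphism exactly when `α '' S = S⁻¹`. Conversely such a flip lies in `X` and carries
arcs leaving `H₁` to arcs leaving `H₀`, while `R(H)` and local arc-transitivity carry every arc
leaving `H₀` to `(1₀, 1₁)`.
-/

namespace SimpleGraph

variable {V : Type*} {G : SimpleGraph V}

def IsLocallyArcTransitiveAt (K : Subgroup (G ≃g G)) (v : V) : Prop :=
  ∀ u w, G.Adj v u → G.Adj v w → ∃ φ ∈ K, φ v = v ∧ φ u = w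

def IsArcTransitive (K : Subgroup (G ≃g G)) : Prop :=
  ∀ a₁ b₁ a₂ b₂, G.Adj a₁ b₁ → G.Adj a₂ b₂ → ∃ φ ∈ K, φ a₁ = a₂ ∧ φ b₁ = b₂

theorem IsArcTransitive.of_forall_exists_map_eq {K : Subgroup (G ≃g G)} (a₀ b₀ : V)
    (h : ∀ a b, G.Adj a b → ∃ φ ∈ K, φ a = a₀ ∧ φ b = b₀) : IsArcTransitive K := by
  intro a₁ b₁ a₂ b₂ h₁ h₂
  obtain ⟨φ₁, hφ₁, ha₁, hb₁⟩ := h a₁ b₁ h₁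
  obtain ⟨φ₂, hφ₂, ha₂, hb₂⟩ := h a₂ b₂ h₂
  refine ⟨φ₂⁻¹ * φ₁, mul_mem (inv_mem hφ₂) hφ₁, ?_, ?_⟩
  · rw [RelIso.mul_apply, ha₁, ← ha₂, RelIso.inv_apply_self]
  · rw [RelIso.mul_apply, hb₁, ← hb₂, RelIso.inv_apply_self]

end SimpleGraph

theorem MonoidHom.mem_normalizer_range_iff {H G : Type*} [Group H] [Group G] {f : H →* G}
    (hf : Function.Injective f) {φ : G} :
    φ ∈ Subgroup.normalizer (f.range : Set G) ↔ ∃ α : H ≃* H, ∀ g, f (α g) = φ * f g * φ⁻¹ := by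
  constructor
  · intro hφ
    choose σ hσ using fun g => (Subgroup.mem_set_normalizer_iff.1 hφ (f g)).1 ⟨g, rfl⟩
    choose τ hτ using fun g => (Subgroup.mem_set_normalizer_iff''.1 hφ (f g)).1 ⟨g, rfl⟩
    refine ⟨{ toFun := σ, invFun := τ, left_inv := fun g => hf ?_, right_inv := fun g => hf ?_,
              map_mul' := fun g g' => hf ?_ }, hσ⟩ <;> simp only [hσ, hτ, map_mul] <;> group
  · rintro ⟨α, hα⟩
    rw [Subgroup.mem_set_normalizer_iff]
    intro x
    constructor
    · rintro ⟨g, rfl⟩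
      exact ⟨α g, hα g⟩
    · rintro ⟨g, hg⟩
      refine ⟨α.symm g, mul_left_cancel (a := φ) (mul_right_cancel (b := φ⁻¹) ?_)⟩
      rw [← hα, α.apply_symm_apply, hg]

theorem MulEquiv.image_eq_inv_iff {H : Type*} [Group H] (α : H ≃* H) (S : Set H) :
    α '' S = S⁻¹ ↔ ∀ z, (α z)⁻¹ ∈ S ↔ z ∈ S := by
  constructor
  · intro h z
    rw [← Set.mem_inv, ← h, α.injective.mem_set_image]
  · intro h
    ext t
    rw [Set.mem_inv, ← α.apply_symm_apply t, α.injective.mem_set_image, h]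

section BiCay

variable {H : Type*} [Group H]

theorem biCayRightMul_apply (R L S : Set H) (g : H) (x : H × Bool) :
    biCayRightMul H R L S g x = (x.1 * g⁻¹, x.2) := rfl

theorem biCayRightMul_injective (R L S : Set H) : Function.Injective (biCayRightMul H R L S) := by
  intro g h hgh
  simpa [biCayRightMul_apply] using congrArg (fun φ => (φ ((1 : H), false)).1) hgh

theorem apply_eq_of_conj_biCayRightMul {R L S : Set H} {φ : biCay H R L S ≃g biCay H R L S}
    {α : H ≃* H} (hα : ∀ g, biCayRightMul H R L S (α g) = φ * biCayRightMul H R L S g * φ⁻¹)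
    (hφ : ∀ b, φ (1, b) = (1, !b)) (x : H × Bool) : φ x = (α x.1, !x.2) := by
  have hcomm : φ * biCayRightMul H R L S x.1⁻¹ = biCayRightMul H R L S (α x.1⁻¹) * φ := by
    rw [hα]; group
  calc φ x = (φ * biCayRightMul H R L S x.1⁻¹) (1, x.2) := by
        rw [RelIso.mul_apply, biCayRightMul_apply, one_mul, inv_inv]
    _ = (biCayRightMul H R L S (α x.1⁻¹) * φ) (1, x.2) := by rw [hcomm]
    _ = (α x.1, !x.2) := by
        rw [RelIso.mul_apply, hφ, biCayRightMul_apply, one_mul, map_inv, inv_inv]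

variable {S : Set H}

local notation "Γ" => biCay H ∅ ∅ S

local notation "X" => Subgroup.normalizer (biCayRH H ∅ ∅ S : Set (Γ ≃g Γ))

theorem biCay_empty_adj_iff (a b : H × Bool) :
    (Γ).Adj a b ↔ (a.2 = false ∧ b.2 = true ∧ b.1 * a.1⁻¹ ∈ S) ∨
      (a.2 = true ∧ b.2 = false ∧ a.1 * b.1⁻¹ ∈ S) := by
  constructor
  · rintro ⟨-, h⟩
    simpa using h
  · rintro (⟨ha, hb, hS⟩ | ⟨ha, hb, hS⟩) <;>
      exact ⟨fun hab => by simp_all, by tauto⟩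

theorem biCay_empty_flip_adj_iff (α : H ≃* H) :
    (∀ a b, (Γ).Adj (α a.1, !a.2) (α b.1, !b.2) ↔ (Γ).Adj a b) ↔ α '' S = S⁻¹ := by
  rw [α.image_eq_inv_iff]
  constructor
  · intro h z
    simpa [biCay_empty_adj_iff] using h (1, false) (z, true)
  · intro h a b
    have key : ∀ x y : H, α x * (α y)⁻¹ ∈ S ↔ y * x⁻¹ ∈ S := fun x y => by
      rw [← h (y * x⁻¹), map_mul, map_inv, mul_inv_rev, inv_inv]
    rcases a with ⟨x, _ | _⟩ <;> rcases b with ⟨y, _ | _⟩ <;> simp [biCay_empty_adj_iff, key]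

def biCayFlip (α : H ≃* H) (hα : α '' S = S⁻¹) : Γ ≃g Γ where
  toEquiv := α.toEquiv.prodCongr Equiv.boolNot
  map_rel_iff' := (biCay_empty_flip_adj_iff α).2 hα _ _

theorem biCayFlip_apply (α : H ≃* H) (hα : α '' S = S⁻¹) (x : H × Bool) :
    biCayFlip α hα x = (α x.1, !x.2) := rfl

theorem biCayFlip_mem_normalizer (α : H ≃* H) (hα : α '' S = S⁻¹) : biCayFlip α hα ∈ X := by
  refine (MonoidHom.mem_normalizer_range_iff (biCayRightMul_injective _ _ _)).2 ⟨α, fun g => ?_⟩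
  refine eq_mul_inv_of_mul_eq (RelIso.ext fun x => ?_)
  simp [biCayFlip_apply, biCayRightMul_apply]

theorem exists_mem_normalizer_map_arc_eq_of_isLocallyArcTransitiveAt (h1 : (1 : H) ∈ S)
    (hlocal : IsLocallyArcTransitiveAt X ((1 : H), false)) {x y : H}
    (hxy : (Γ).Adj (x, false) (y, true)) :
    ∃ φ ∈ X, φ (x, false) = (1, false) ∧ φ (y, true) = (1, true) := by
  have hy : (Γ).Adj (1, false) (y * x⁻¹, true) := by
    simpa [biCay_empty_adj_iff] using hxy
  have h1' : (Γ).Adj (1, false) (1, true) := by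
    simpa [biCay_empty_adj_iff] using h1
  obtain ⟨ψ, hψ, hψ1, hψy⟩ := hlocal _ _ hy h1'
  refine ⟨ψ * biCayRightMul H ∅ ∅ S x, mul_mem hψ (Subgroup.le_normalizer ⟨x, rfl⟩), ?_, ?_⟩
  · simpa [biCayRightMul_apply] using hψ1
  · simpa [biCayRightMul_apply] using hψy

theorem isArcTransitive_normalizer_of_image_eq_inv (h1 : (1 : H) ∈ S)
    (hlocal : IsLocallyArcTransitiveAt X ((1 : H), false)) {α : H ≃* H} (hα : α '' S = S⁻¹) :
    IsArcTransitive X := by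
  refine .of_forall_exists_map_eq ((1 : H), false) ((1 : H), true) ?_
  rintro ⟨x, _ | _⟩ ⟨y, _ | _⟩ hxy
  · simp [biCay_empty_adj_iff] at hxy
  · exact exists_mem_normalizer_map_arc_eq_of_isLocallyArcTransitiveAt h1 hlocal hxy
  · obtain ⟨φ, hφ, hx, hy⟩ := exists_mem_normalizer_map_arc_eq_of_isLocallyArcTransitiveAt h1
      hlocal ((biCayFlip α hα).map_rel_iff.2 hxy)
    exact ⟨φ * biCayFlip α hα, mul_mem hφ (biCayFlip_mem_normalizer α hα), hx, hy⟩
  · simp [biCay_empty_adj_iff] at hxy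

theorem exists_image_eq_inv_of_isArcTransitive_normalizer (h1 : (1 : H) ∈ S)
    (h : IsArcTransitive X) : ∃ α : H ≃* H, α '' S = S⁻¹ := by
  have harc : (Γ).Adj (1, false) (1, true) := by
    simpa [biCay_empty_adj_iff] using h1
  obtain ⟨φ, hφ, hφ0, hφ1⟩ := h _ _ _ _ harc harc.symm
  obtain ⟨α, hα⟩ := (MonoidHom.mem_normalizer_range_iff (biCayRightMul_injective _ _ _)).1 hφ
  have hφα := apply_eq_of_conj_biCayRightMul hα (Bool.forall_bool.2 ⟨hφ0, hφ1⟩)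
  refine ⟨α, (biCay_empty_flip_adj_iff α).1 fun a b => ?_⟩
  rw [← hφα, ← hφα]
  exact φ.map_rel_iff

end BiCay

theorem biCay_normal_locally_arc_transitive_arc_transitive_iff_general
    {H : Type*} [Group H] (S : Set H) (h1 : (1 : H) ∈ S)
    (hlocal : ∀ u w : H × Bool,
      (biCay H ∅ ∅ S).Adj ((1 : H), false) u → (biCay H ∅ ∅ S).Adj ((1 : H), false) w →
      ∃ φ ∈ Subgroup.normalizer (biCayRH H ∅ ∅ S : Set (biCay H ∅ ∅ S ≃g biCay H ∅ ∅ S)),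
        φ ((1 : H), false) = ((1 : H), false) ∧ φ u = w) :
    (∀ a₁ b₁ a₂ b₂ : H × Bool,
        (biCay H ∅ ∅ S).Adj a₁ b₁ → (biCay H ∅ ∅ S).Adj a₂ b₂ →
        ∃ φ ∈ Subgroup.normalizer (biCayRH H ∅ ∅ S : Set (biCay H ∅ ∅ S ≃g biCay H ∅ ∅ S)), φ a₁ = a₂ ∧ φ b₁ = b₂)
    ↔ ∃ α : H ≃* H, ⇑α '' S = S⁻¹ :=
  ⟨exists_image_eq_inv_of_isArcTransitive_normalizer h1,
    fun ⟨_, hα⟩ => isArcTransitive_normalizer_of_image_eq_inv h1 hlocal hα⟩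

/-- Let `Γ = BiCay(H,∅,∅,S)` be a connected bi-Cayley graph with
`1 ∈ S`, `X` the normalizer of `R(H)` in `Aut(Γ)`, and suppose `Γ` is normal locally
arc-transitive, i.e. the stabilizer of `1₀` in `X` is transitive on the neighbourhood
of `1₀`. Then `X` is transitive on the arcs of `Γ` iff some automorphism `α` of `H`
satisfies `S^α = S⁻¹`. -/
theorem biCay_normal_locally_arc_transitive_arc_transitive_iff
    {H : Type*} [Group H] [Finite H] (S : Set H) (h1 : (1 : H) ∈ S)
    (hconn : (biCay H ∅ ∅ S).Connected)
    (hlocal : ∀ u w : H × Bool,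
      (biCay H ∅ ∅ S).Adj ((1 : H), false) u → (biCay H ∅ ∅ S).Adj ((1 : H), false) w →
      ∃ φ ∈ Subgroup.normalizer (biCayRH H ∅ ∅ S : Set (biCay H ∅ ∅ S ≃g biCay H ∅ ∅ S)),
        φ ((1 : H), false) = ((1 : H), false) ∧ φ u = w) :
    (∀ a₁ b₁ a₂ b₂ : H × Bool,
        (biCay H ∅ ∅ S).Adj a₁ b₁ → (biCay H ∅ ∅ S).Adj a₂ b₂ →
        ∃ φ ∈ Subgroup.normalizer (biCayRH H ∅ ∅ S : Set (biCay H ∅ ∅ S ≃g biCay H ∅ ∅ S)), φ a₁ = a₂ ∧ φ b₁ = b₂)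
    ↔ ∃ α : H ≃* H, ⇑α '' S = S⁻¹ :=
  biCay_normal_locally_arc_transitive_arc_transitive_iff_general S h1 hlocal
end

section
/- No connected bi-Cayley graph over a finite abelian group is semisymmetric; that is, if Γ = BiCay(H,R,L,S) with H abelian is edge-transitive and regular (of constant valency), then Γ is vertex-transitive. -/
open SimpleGraph

theorem SimpleGraph.Preconnected.exists_adj_apply_ne {V β : Type*} {G : SimpleGraph V}
    (hG : G.Preconnected) (f : V → β) {u v : V} (huv : f u ≠ f v) :
    ∃ a b, G.Adj a b ∧ f a ≠ f b := by
  obtain ⟨w⟩ := hG u v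
  obtain ⟨d, -, hd, hd'⟩ := w.exists_boundary_dart {x | f x = f u} rfl huv.symm
  exact ⟨d.fst, d.snd, d.adj, fun h => hd' (h.symm.trans hd)⟩

theorem Sym2.exists_apply_ne_of_map_eq {α β : Type*} {f : α → α} (p : α → β) {a b c d : α}
    (hab : p a = p b) (hcd : p c ≠ p d) (h : Sym2.map f s(a, b) = s(c, d)) :
    ∃ x, p (f x) ≠ p x := by
  by_contra! hf
  rw [Sym2.map_mk, Sym2.eq_iff] at h
  apply hcd
  rcases h with ⟨rfl, rfl⟩ | ⟨rfl, rfl⟩ <;> simp only [hf, hab]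

namespace biCay

section Group

variable {H : Type*} [Group H] {R L S : Set H}

@[simp]
theorem adj_false_false {a b : H} :
    (biCay H R L S).Adj (a, false) (b, false) ↔ a ≠ b ∧ b * a⁻¹ ∈ R ∧ a * b⁻¹ ∈ R := by
  simp [biCay]

@[simp]
theorem adj_true_true {a b : H} :
    (biCay H R L S).Adj (a, true) (b, true) ↔ a ≠ b ∧ b * a⁻¹ ∈ L ∧ a * b⁻¹ ∈ L := by
  simp [biCay]

@[simp]
theorem adj_false_true {a b : H} : (biCay H R L S).Adj (a, false) (b, true) ↔ b * a⁻¹ ∈ S := by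
  simp [biCay]

@[simp]
theorem adj_true_false {a b : H} : (biCay H R L S).Adj (a, true) (b, false) ↔ a * b⁻¹ ∈ S := by
  simp [biCay]

theorem mem_orbit_of_snd_eq {v w : H × Bool} (h : v.2 = w.2) :
    w ∈ MulAction.orbit (biCay H R L S ≃g biCay H R L S) v :=
  ⟨biCayRightMul H R L S (w.1⁻¹ * v.1), Prod.ext (by simp [biCayRightMul]) h⟩

theorem isPretransitive_of_snd_ne (ψ : biCay H R L S ≃g biCay H R L S) (p : H × Bool)
    (hψ : (ψ p).2 ≠ p.2) :
    MulAction.IsPretransitive (biCay H R L S ≃g biCay H R L S) (H × Bool) := by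
  have hψp : ψ p ∈ MulAction.orbit (biCay H R L S ≃g biCay H R L S) p := ⟨ψ, rfl⟩
  refine .of_orbit (x₀ := p) fun w => show w ∈ MulAction.orbit _ p from ?_
  obtain h | h : w.2 = p.2 ∨ w.2 = (ψ p).2 := by
    revert hψ; cases w.2 <;> cases p.2 <;> cases (ψ p).2 <;> simp
  · exact mem_orbit_of_snd_eq h.symm
  · rw [← MulAction.orbit_eq_iff.mpr hψp]
    exact mem_orbit_of_snd_eq h.symm

theorem eq_biCay_empty_of_forall_adj_snd_ne
    (h : ∀ v w, (biCay H R L S).Adj v w → v.2 ≠ w.2) : biCay H R L S = biCay H ∅ ∅ S := by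
  ext ⟨a, _ | _⟩ ⟨b, _ | _⟩
  · simpa using h (a, false) (b, false)
  · simp
  · simp
  · simpa using h (a, true) (b, true)

end Group

variable {H : Type*} [CommGroup H] {R L S : Set H}

def invIso : biCay H R L S ≃g biCay H L R S where
  toFun v := (v.1⁻¹, !v.2)
  invFun v := (v.1⁻¹, !v.2)
  left_inv v := by simp
  right_inv v := by simp
  map_rel_iff' := by
    rintro ⟨a, _ | _⟩ ⟨b, _ | _⟩ <;> simp [mul_comm, and_comm]

end biCay

theorem biCay_abelian_not_semisymmetric_general
    {H : Type*} [CommGroup H] (R L S : Set H)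
    (hconn : (biCay H R L S).Connected)
    (hET : ∀ e₁ ∈ (biCay H R L S).edgeSet, ∀ e₂ ∈ (biCay H R L S).edgeSet,
      ∃ φ : biCay H R L S ≃g biCay H R L S, Sym2.map ⇑φ e₁ = e₂) :
    ∀ v w : H × Bool, ∃ φ : biCay H R L S ≃g biCay H R L S, φ v = w := by
  suffices ∃ (ψ : biCay H R L S ≃g biCay H R L S) (p : H × Bool), (ψ p).2 ≠ p.2 by
    obtain ⟨ψ, p, hψ⟩ := this
    exact (biCay.isPretransitive_of_snd_ne ψ p hψ).exists_smul_eq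
  obtain ⟨c, d, hcd, hcd'⟩ :=
    hconn.preconnected.exists_adj_apply_ne Prod.snd (u := (1, false)) (v := (1, true)) (by simp)
  by_cases hpart : ∃ a b, (biCay H R L S).Adj a b ∧ a.2 = b.2
  · obtain ⟨a, b, hab, hab'⟩ := hpart
    obtain ⟨φ, hφ⟩ := hET s(a, b) hab s(c, d) hcd
    exact ⟨φ, Sym2.exists_apply_ne_of_map_eq Prod.snd hab' hcd' hφ⟩
  · push Not at hpart
    rw [biCay.eq_biCay_empty_of_forall_adj_snd_ne hpart]
    exact ⟨biCay.invIso, (1, false), by simp [biCay.invIso]⟩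

/-- No connected bi-Cayley graph over a finite abelian group is
semisymmetric: if `Γ = BiCay(H,R,L,S)` with `H` abelian is edge-transitive and regular
(of constant valency), then `Γ` is vertex-transitive. -/
theorem biCay_abelian_not_semisymmetric
    {H : Type*} [CommGroup H] [Finite H] (R L S : Set H)
    (hR : R⁻¹ = R) (hL : L⁻¹ = L) (h1 : (1 : H) ∉ R ∪ L)
    (hconn : (biCay H R L S).Connected)
    (hreg : ∀ v w : H × Bool,
      Nat.card ((biCay H R L S).neighborSet v) = Nat.card ((biCay H R L S).neighborSet w))
    (hET : ∀ e₁ ∈ (biCay H R L S).edgeSet, ∀ e₂ ∈ (biCay H R L S).edgeSet,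
      ∃ φ : biCay H R L S ≃g biCay H R L S, Sym2.map ⇑φ e₁ = e₂) :
    ∀ v w : H × Bool, ∃ φ : biCay H R L S ≃g biCay H R L S, φ v = w :=
  biCay_abelian_not_semisymmetric_general R L S hconn hET
end

section
/- Let n, m ≥ 1 and let λ ∈ ℤ be a unit modulo n with λ² − λ + 1 ≡ 0 (mod n). In the abelian group H = ⟨x⟩ × ⟨y⟩ ≅ C_{nm} × C_m, the element x^{λ−1}y has order nm, and the element x^{−(λ²−λ+1)}y^{λ} has order m. Consequently the pair (x^{λ−1}y, x^{−(λ²−λ+1)}y^{−λ}) generates H and determines an automorphism of H mapping (x,y) to it. -/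
section Aux

variable (n m : ℕ)

/-- The additive hom `ZMod m →+ ZMod (n*m)` sending `1` to an element `e`
killed by `m`. -/
private def Bhom (e : ZMod (n * m)) (he : (m : ℤ) • e = 0) : ZMod m →+ ZMod (n * m) :=
  ZMod.lift m ⟨zmultiplesHom _ e, by simpa using he⟩

private lemma Bhom_intCast (e : ZMod (n * m)) (he : (m : ℤ) • e = 0) (k : ℤ) :
    Bhom n m e he ((k : ℤ) : ZMod m) = (k : ℤ) • e := by
  simp [Bhom]

/-- The "matrix" additive hom on `ZMod (n*m) × ZMod m` given by integers `a b c d`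
with `n*m ∣ m*b`. -/
private def mHom (a b c d : ℤ) (hb : ((m * b : ℤ) : ZMod (n * m)) = 0) :
    ZMod (n * m) × ZMod m →+ ZMod (n * m) × ZMod m :=
  AddMonoidHom.prod
    (AddMonoidHom.coprod
      ((AddMonoidHom.mulLeft ((a : ℤ) : ZMod (n * m))))
      (Bhom n m ((b : ℤ) : ZMod (n * m)) (by
        have : (m : ℤ) • ((b : ℤ) : ZMod (n * m)) = ((m * b : ℤ) : ZMod (n * m)) := by
          rw [zsmul_eq_mul]; push_cast; ring
        rw [this, hb])))
    (AddMonoidHom.coprod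
      ((AddMonoidHom.mulLeft ((c : ℤ) : ZMod m)).comp
        (ZMod.castHom (dvd_mul_left m n) (ZMod m)).toAddMonoidHom)
      ((AddMonoidHom.mulLeft ((d : ℤ) : ZMod m))))

private lemma mHom_int (a b c d : ℤ) (hb : ((m * b : ℤ) : ZMod (n * m)) = 0) (u v : ℤ) :
    mHom n m a b c d hb (((u : ℤ) : ZMod (n * m)), ((v : ℤ) : ZMod m))
      = (((a * u + b * v : ℤ) : ZMod (n * m)), ((c * u + d * v : ℤ) : ZMod m)) := by
  simp only [mHom, AddMonoidHom.prod_apply, AddMonoidHom.coprod_apply,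
    AddMonoidHom.coe_mulLeft, AddMonoidHom.comp_apply, RingHom.toAddMonoidHom_eq_coe,
    AddMonoidHom.coe_coe, Bhom_intCast, map_intCast]
  refine Prod.ext ?_ ?_
  · show ((a : ℤ) : ZMod (n * m)) * _ + _ • _ = _
    rw [zsmul_eq_mul]; push_cast; ring
  · show ((c : ℤ) : ZMod m) * _ + _ = _
    push_cast; ring

private lemma mHom_x (a b c d : ℤ) (hb : ((m * b : ℤ) : ZMod (n * m)) = 0) :
    mHom n m a b c d hb (1, 0) = (((a : ℤ) : ZMod (n * m)), ((c : ℤ) : ZMod m)) := by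
  have := mHom_int n m a b c d hb 1 0
  simpa using this

private lemma mHom_y (a b c d : ℤ) (hb : ((m * b : ℤ) : ZMod (n * m)) = 0) :
    mHom n m a b c d hb (0, 1) = (((b : ℤ) : ZMod (n * m)), ((d : ℤ) : ZMod m)) := by
  have := mHom_int n m a b c d hb 0 1
  simpa using this

/-- Two integer matrices which are inverse to each other over `ℤ` give mutually inverse
endomorphisms, hence an automorphism of `ZMod (n*m) × ZMod m`. -/
private def mEquiv (a b c d a' b' c' d' : ℤ)
    (hb : ((m * b : ℤ) : ZMod (n * m)) = 0) (hb' : ((m * b' : ℤ) : ZMod (n * m)) = 0)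
    (h1 : a' * a + b' * c = 1) (h2 : a' * b + b' * d = 0)
    (h3 : c' * a + d' * c = 0) (h4 : c' * b + d' * d = 1)
    (h5 : a * a' + b * c' = 1) (h6 : a * b' + b * d' = 0)
    (h7 : c * a' + d * c' = 0) (h8 : c * b' + d * d' = 1) :
    (ZMod (n * m) × ZMod m) ≃+ (ZMod (n * m) × ZMod m) where
  toFun := mHom n m a b c d hb
  invFun := mHom n m a' b' c' d' hb'
  left_inv := by
    rintro ⟨u0, v0⟩
    rw [← ZMod.intCast_zmod_cast u0, ← ZMod.intCast_zmod_cast v0]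
    set u : ℤ := ZMod.cast u0
    set v : ℤ := ZMod.cast v0
    rw [mHom_int, mHom_int]
    have e1 : a' * (a * u + b * v) + b' * (c * u + d * v) = u := by
      linear_combination u * h1 + v * h2
    have e2 : c' * (a * u + b * v) + d' * (c * u + d * v) = v := by
      linear_combination u * h3 + v * h4
    rw [e1, e2]
  right_inv := by
    rintro ⟨u0, v0⟩
    rw [← ZMod.intCast_zmod_cast u0, ← ZMod.intCast_zmod_cast v0]
    set u : ℤ := ZMod.cast u0
    set v : ℤ := ZMod.cast v0
    rw [mHom_int, mHom_int]
    have e1 : a * (a' * u + b' * v) + b * (c' * u + d' * v) = u := by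
      linear_combination u * h5 + v * h6
    have e2 : c * (a' * u + b' * v) + d * (c' * u + d' * v) = v := by
      linear_combination u * h7 + v * h8
    rw [e1, e2]
  map_add' := map_add _

private lemma mEquiv_apply (a b c d a' b' c' d' : ℤ)
    (hb : ((m * b : ℤ) : ZMod (n * m)) = 0) (hb' : ((m * b' : ℤ) : ZMod (n * m)) = 0)
    (h1 : a' * a + b' * c = 1) (h2 : a' * b + b' * d = 0)
    (h3 : c' * a + d' * c = 0) (h4 : c' * b + d' * d = 1)
    (h5 : a * a' + b * c' = 1) (h6 : a * b' + b * d' = 0)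
    (h7 : c * a' + d * c' = 0) (h8 : c * b' + d * d' = 1) (p : ZMod (n * m) × ZMod m) :
    mEquiv n m a b c d a' b' c' d' hb hb' h1 h2 h3 h4 h5 h6 h7 h8 p
      = mHom n m a b c d hb p := rfl

end Aux

/-- Let `n, m ≥ 1` and let `λ` be a unit modulo `n` with
`λ² − λ + 1 ≡ 0 (mod n)`. In the abelian group `H = C_{nm} × C_m` (written additively as
`ZMod (n*m) × ZMod m`, with `x = (1,0)` and `y = (0,1)`), the element `x^{λ−1}·y` has
order `nm`, the element `x^{−(λ²−λ+1)}·y^{λ}` has order `m`, and the pair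
`(x^{λ−1}·y, x^{−(λ²−λ+1)}·y^{−λ})` generates `H` and is the image of `(x,y)` under an
automorphism of `H`. -/
theorem order_and_automorphism_in_Cnm_times_Cm
    (n m : ℕ) (l : ℤ) (hn : 1 ≤ n) (hm : 1 ≤ m)
    (hunit : IsUnit ((l : ℤ) : ZMod n))
    (hcong : ((l ^ 2 - l + 1 : ℤ) : ZMod n) = 0) :
    addOrderOf ((((l - 1 : ℤ) : ZMod (n * m)), (1 : ZMod m)) : ZMod (n * m) × ZMod m)
        = n * m ∧
    addOrderOf ((((-(l ^ 2 - l + 1) : ℤ) : ZMod (n * m)), ((l : ℤ) : ZMod m)) :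
        ZMod (n * m) × ZMod m) = m ∧
    AddSubgroup.closure
        ({(((l - 1 : ℤ) : ZMod (n * m)), (1 : ZMod m)),
          (((-(l ^ 2 - l + 1) : ℤ) : ZMod (n * m)), ((-l : ℤ) : ZMod m))} :
          Set (ZMod (n * m) × ZMod m)) = ⊤ ∧
    ∃ φ : (ZMod (n * m) × ZMod m) ≃+ (ZMod (n * m) × ZMod m),
      φ ((1 : ZMod (n * m)), (0 : ZMod m)) = (((l - 1 : ℤ) : ZMod (n * m)), (1 : ZMod m)) ∧
      φ ((0 : ZMod (n * m)), (1 : ZMod m)) =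
        (((-(l ^ 2 - l + 1) : ℤ) : ZMod (n * m)), ((-l : ℤ) : ZMod m)) := by
  haveI : NeZero (n * m) := ⟨by positivity⟩
  haveI : NeZero m := ⟨by omega⟩
  -- key divisibility: n ∣ l² - l + 1 (as integers)
  have hdvd : (n : ℤ) ∣ (l ^ 2 - l + 1) := by
    rwa [← ZMod.intCast_zmod_eq_zero_iff_dvd]
  have hb : ((m * -(l ^ 2 - l + 1) : ℤ) : ZMod (n * m)) = 0 := by
    rw [ZMod.intCast_zmod_eq_zero_iff_dvd]
    obtain ⟨t, ht⟩ := hdvd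
    push_cast
    rw [ht]
    exact ⟨-t, by ring⟩
  have hb2 : ((m * (l ^ 2 - l + 1) : ℤ) : ZMod (n * m)) = 0 := by
    rw [ZMod.intCast_zmod_eq_zero_iff_dvd]
    obtain ⟨t, ht⟩ := hdvd
    push_cast
    rw [ht]
    exact ⟨t, by ring⟩
  -- the main automorphism: matrix [[l-1, -(l²-l+1)], [1, -l]], det = 1
  let φ := mEquiv n m (l - 1) (-(l ^ 2 - l + 1)) 1 (-l)
    (-l) (l ^ 2 - l + 1) (-1) (l - 1) hb hb2
    (by ring) (by ring) (by ring) (by ring) (by ring) (by ring) (by ring) (by ring)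
  have hφx : φ ((1 : ZMod (n * m)), (0 : ZMod m))
      = (((l - 1 : ℤ) : ZMod (n * m)), (1 : ZMod m)) := by
    rw [mEquiv_apply, mHom_x]
    norm_num
  have hφy : φ ((0 : ZMod (n * m)), (1 : ZMod m))
      = (((-(l ^ 2 - l + 1) : ℤ) : ZMod (n * m)), ((-l : ℤ) : ZMod m)) := by
    rw [mEquiv_apply, mHom_y]
  -- second automorphism: matrix [[l-1, -(l²-l+1)], [-1, l]], det = -1
  let φ' := mEquiv n m (l - 1) (-(l ^ 2 - l + 1)) (-1) l
    (-l) (-(l ^ 2 - l + 1)) (-1) (-(l - 1)) hb hb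
    (by ring) (by ring) (by ring) (by ring) (by ring) (by ring) (by ring) (by ring)
  have hφ'y : φ' ((0 : ZMod (n * m)), (1 : ZMod m))
      = (((-(l ^ 2 - l + 1) : ℤ) : ZMod (n * m)), ((l : ℤ) : ZMod m)) := by
    rw [mEquiv_apply, mHom_y]
  -- orders of the standard generators
  have hordx : addOrderOf (((1 : ZMod (n * m)), (0 : ZMod m)) : ZMod (n * m) × ZMod m)
      = n * m := by
    have h := addOrderOf_injective (AddMonoidHom.inl (ZMod (n * m)) (ZMod m))
      (fun a b hab => congrArg Prod.fst hab) (1 : ZMod (n * m))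
    simpa [ZMod.addOrderOf_one] using h
  have hordy : addOrderOf (((0 : ZMod (n * m)), (1 : ZMod m)) : ZMod (n * m) × ZMod m)
      = m := by
    have h := addOrderOf_injective (AddMonoidHom.inr (ZMod (n * m)) (ZMod m))
      (fun a b hab => congrArg Prod.snd hab) (1 : ZMod m)
    simpa [ZMod.addOrderOf_one] using h
  have hordφ : ∀ (ψ : (ZMod (n * m) × ZMod m) ≃+ (ZMod (n * m) × ZMod m)) p,
      addOrderOf (ψ p) = addOrderOf p := fun ψ p =>
    addOrderOf_injective ψ.toAddMonoidHom ψ.injective p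
  -- closure of the standard generators
  have hcl : AddSubgroup.closure
      ({((1 : ZMod (n * m)), (0 : ZMod m)), ((0 : ZMod (n * m)), (1 : ZMod m))} :
        Set (ZMod (n * m) × ZMod m)) = ⊤ := by
    rw [eq_top_iff]
    rintro ⟨u, v⟩ -
    have hu : ((u.val : ℕ) : ZMod (n * m)) = u := by rw [ZMod.natCast_val, ZMod.cast_id]
    have hv : ((v.val : ℕ) : ZMod m) = v := by rw [ZMod.natCast_val, ZMod.cast_id]
    have key : ((u, v) : ZMod (n * m) × ZMod m)
        = u.val • ((1 : ZMod (n * m)), (0 : ZMod m))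
          + v.val • ((0 : ZMod (n * m)), (1 : ZMod m)) := by
      rw [Prod.smul_mk, Prod.smul_mk, Prod.mk_add_mk]
      simp only [smul_zero, nsmul_eq_mul, mul_one, add_zero, zero_add]
      rw [hu, hv]
    rw [key]
    exact AddSubgroup.add_mem _
      (AddSubgroup.nsmul_mem _ (AddSubgroup.subset_closure (by simp)) _)
      (AddSubgroup.nsmul_mem _ (AddSubgroup.subset_closure (by simp)) _)
  refine ⟨?_, ?_, ?_, ⟨φ, hφx, hφy⟩⟩
  · rw [← hφx, hordφ φ, hordx]
  · rw [← hφ'y, hordφ φ', hordy]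
  · have himg : ({(((l - 1 : ℤ) : ZMod (n * m)), (1 : ZMod m)),
        (((-(l ^ 2 - l + 1) : ℤ) : ZMod (n * m)), ((-l : ℤ) : ZMod m))} :
          Set (ZMod (n * m) × ZMod m))
        = ⇑φ.toAddMonoidHom ''
            {((1 : ZMod (n * m)), (0 : ZMod m)), ((0 : ZMod (n * m)), (1 : ZMod m))} := by
      rw [Set.image_insert_eq, Set.image_singleton]
      exact congrArg₂ _ hφx.symm (congrArg _ hφy.symm)
    rw [himg, ← AddMonoidHom.map_closure, hcl]
    exact AddSubgroup.map_top_of_surjective _ φ.surjective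
end

section
/- Let k ≥ 3 be odd, n ≥ 1, and let λ be an integer with λ^k ≡ −1 (mod n) and 1 + λ² + λ⁴ + … + λ^{2(k−1)} ≡ 0 (mod n). Set ℓ = λ + λ³ + … + λ^{k−2} (the sum of odd powers up to k−2). Then 1 + λℓ ≡ ℓ (mod n), and 2ℓ(1 − λ) ≡ 2 (mod n). -/
lemma sum_split_aux (l : ℤ) (m : ℕ) :
    (∑ i ∈ Finset.range (2 * m + 1), l ^ (2 * i)) =
      1 + l * (∑ i ∈ Finset.range m, l ^ (2 * i + 1))
        + l ^ (2 * m + 1) * (∑ i ∈ Finset.range m, l ^ (2 * i + 1)) := by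
  have hsplit : 2 * m + 1 = (m + 1) + m := by ring
  rw [hsplit, Finset.sum_range_add, Finset.sum_range_succ']
  have h1 : ∀ i, l ^ (2 * (i + 1)) = l * l ^ (2 * i + 1) := by
    intro i; rw [← pow_succ']; congr 1
  have h2 : ∀ i, l ^ (2 * (m + 1 + i)) = l ^ (2 * m + 1) * l ^ (2 * i + 1) := by
    intro i; rw [← pow_add]; congr 1; ring
  simp only [h1, h2, ← Finset.mul_sum]
  ring
/-- Let `k ≥ 3` be odd, `n ≥ 1`, and `λ` satisfy `λ^k ≡ −1 (mod n)`
and `1 + λ² + ⋯ + λ^{2(k−1)} ≡ 0 (mod n)`. With `ℓ = λ + λ³ + ⋯ + λ^{k−2}`, we have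
`1 + λℓ ≡ ℓ (mod n)` and `2ℓ(1 − λ) ≡ 2 (mod n)`. -/
theorem ell_identities_mod_n
    (k n : ℕ) (l : ℤ) (hk : 3 ≤ k) (hkodd : Odd k) (hn : 1 ≤ n)
    (hlk : ((l ^ k : ℤ) : ZMod n) = -1)
    (hsum : ((∑ i ∈ Finset.range k, l ^ (2 * i) : ℤ) : ZMod n) = 0) :
    ((1 + l * (∑ i ∈ Finset.range ((k - 1) / 2), l ^ (2 * i + 1)) : ℤ) : ZMod n)
        = ((∑ i ∈ Finset.range ((k - 1) / 2), l ^ (2 * i + 1) : ℤ) : ZMod n) ∧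
    ((2 * (∑ i ∈ Finset.range ((k - 1) / 2), l ^ (2 * i + 1)) * (1 - l) : ℤ) : ZMod n)
        = 2 := by
  obtain ⟨m, hm⟩ := hkodd
  have hkm : k = 2 * m + 1 := by omega
  have hm2 : (k - 1) / 2 = m := by omega
  subst hkm
  rw [hm2] at *
  rw [sum_split_aux l m] at hsum
  push_cast at hsum hlk ⊢
  rw [hlk] at hsum
  constructor
  · linear_combination hsum
  · linear_combination (-2 : ZMod n) * hsum
end
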